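/- Fix ξ = (ξ₁,ξ₂) ∈ 𝔻 and define h(·,ξ) : closure(𝔻) → ℝ³ by h((x,y),ξ) = ( ((ξ₁−ξ₂)(x²+y²)−x+y)·((ξ₁+ξ₂)(x²+y²)−x−y) / ((ξ₁²+ξ₂²)(x²+y²)−2ξ₁x−2ξ₂y+1)², 2(ξ₁(x²+y²)−x)(ξ₂(x²+y²)−y) / ((ξ₁²+ξ₂²)(x²+y²)−2ξ₁x−2ξ₂y+1)², 0 ). Then: (i) the denominator (ξ₁²+ξ₂²)(x²+y²)−2ξ₁x−2ξ₂y+1 is strictly positive for all (x,y) in the closed unit disk; (ii) each component of h(·,ξ) is harmonic in 𝔻; (iii) for every (x,y) ∈ ∂𝔻, h((x,y),ξ) = ( ((x−ξ₁)²−(y−ξ₂)²)/((x−ξ₁)²+(y−ξ₂)²)², 2(x−ξ₁)(y−ξ₂)/((x−ξ₁)²+(y−ξ₂)²)², 0 ). In other words, h(·,ξ) is the harmonic extension to 𝔻 of the boundary map h̃((x,y),ξ) = ( ((x−ξ₁)²−(y−ξ₂)²)/((x−ξ₁)²+(y−ξ₂)²)², 2(x−ξ₁)(y−ξ₂)/((x−ξ₁)²+(y−ξ₂)²)²,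 0 ). -/

import Mathlib

/-!
`hExt1 ξ` and `hExt2 ξ` are the real and imaginary parts of the holomorphic function
`(z / (1 - ξ̄ z))²`, and `den ξ z = |1 - ξ̄ z|²` does not vanish on the closed disk since
`|ξ̄ z| < 1` there; real and imaginary parts of holomorphic functions are harmonic. On the unit
circle `z̄ = 1 / z`, so `z / (1 - ξ̄ z) = 1 / (z̄ - ξ̄) = (z - ξ) / |z - ξ|²`, which gives the
boundary values.
-/

noncomputable section

open Metric

/-- Partial derivative in the `x` direction of a scalar function, identifying `ℝ²` with `ℂ`
via `z = x + iy`. -/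
def px (f : ℂ → ℝ) (z : ℂ) : ℝ := fderiv ℝ f z 1

/-- Partial derivative in the `y` direction. -/
def py (f : ℂ → ℝ) (z : ℂ) : ℝ := fderiv ℝ f z Complex.I

/-- `f` is harmonic on `s`: it is `C²` there and its Laplacian vanishes on `s`. -/
def HarmonicOnSet (f : ℂ → ℝ) (s : Set ℂ) : Prop :=
  ContDiffOn ℝ 2 f s ∧ ∀ z ∈ s, px (px f) z + py (py f) z = 0

/-- The denominator `(ξ₁²+ξ₂²)(x²+y²) − 2ξ₁x − 2ξ₂y + 1`. -/
def den (ξ z : ℂ) : ℝ :=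
  (ξ.re ^ 2 + ξ.im ^ 2) * (z.re ^ 2 + z.im ^ 2) - 2 * ξ.re * z.re - 2 * ξ.im * z.im + 1

/-- First component of the harmonic extension `h(·, ξ)`. -/
def hExt1 (ξ z : ℂ) : ℝ :=
  ((ξ.re - ξ.im) * (z.re ^ 2 + z.im ^ 2) - z.re + z.im) *
    ((ξ.re + ξ.im) * (z.re ^ 2 + z.im ^ 2) - z.re - z.im) / (den ξ z) ^ 2

/-- Second component of the harmonic extension `h(·, ξ)`. -/
def hExt2 (ξ z : ℂ) : ℝ :=
  2 * (ξ.re * (z.re ^ 2 + z.im ^ 2) - z.re) * (ξ.im * (z.re ^ 2 + z.im ^ 2) - z.im) /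
    (den ξ z) ^ 2

open Complex ComplexConjugate InnerProductSpace Laplacian

theorem px_px_add_py_py_eq_laplacian {f : ℂ → ℝ} {z : ℂ} (hf : ContDiffAt ℝ 2 f z) :
    px (px f) z + py (py f) z = Δ f z := by
  have hdf : DifferentiableAt ℝ (fderiv ℝ f) z :=
    (hf.fderiv_right (m := 1) le_rfl).differentiableAt one_ne_zero
  have hdir (v : ℂ) : fderiv ℝ (fun w => fderiv ℝ f w v) z v = iteratedFDeriv ℝ 2 f z ![v, v] := by
    rw [fderiv_clm_apply hdf (differentiableAt_const v), iteratedFDeriv_two_apply]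
    simp
  rw [laplacian_eq_iteratedFDeriv_complexPlane]
  exact congr_arg₂ (· + ·) (hdir 1) (hdir I)

theorem InnerProductSpace.HarmonicOnNhd.harmonicOnSet {f : ℂ → ℝ} {s : Set ℂ}
    (hf : HarmonicOnNhd f s) : HarmonicOnSet f s :=
  ⟨hf.contDiffOn, fun z hz => by
    rw [px_px_add_py_py_eq_laplacian (hf z hz).1]
    exact (hf z hz).2.self_of_nhds⟩

def hExtComplex (ξ z : ℂ) : ℂ := (z / (1 - conj ξ * z)) ^ 2

theorem den_eq_normSq (ξ z : ℂ) : den ξ z = normSq (1 - conj ξ * z) := by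
  simp only [den, normSq_apply, sub_re, sub_im, mul_re,
    mul_im, conj_re, conj_im, one_re, one_im]
  ring

theorem one_sub_conj_mul_ne_zero {ξ z : ℂ} (hξ : ‖ξ‖ < 1) (hz : ‖z‖ ≤ 1) :
    1 - conj ξ * z ≠ 0 := by
  refine sub_ne_zero.2 fun h => ?_
  have : ‖conj ξ * z‖ < 1 := by
    rw [norm_mul, norm_conj]
    exact lt_of_le_of_lt (mul_le_of_le_one_right (norm_nonneg ξ) hz) hξ
  simp [← h] at this

theorem den_pos {ξ z : ℂ} (hξ : ‖ξ‖ < 1) (hz : ‖z‖ ≤ 1) : 0 < den ξ z := by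
  rw [den_eq_normSq]
  exact normSq_pos.2 (one_sub_conj_mul_ne_zero hξ hz)

/-- Multiplying numerator and denominator by `1 - ξ z̄` makes the denominator real. -/
theorem hExtComplex_eq_div_den (ξ z : ℂ) :
    hExtComplex ξ z = (z - normSq z * ξ) ^ 2 / ((den ξ z ^ 2 : ℝ) : ℂ) := by
  have hnum : z * conj (1 - conj ξ * z) = z - normSq z * ξ := by
    rw [map_sub, map_one, map_mul, conj_conj, ← mul_conj]
    ring
  rw [hExtComplex, div_eq_mul_inv, inv_def, den_eq_normSq, ← hnum]
  push_cast
  ring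

theorem hExt1_eq_re (ξ z : ℂ) : hExt1 ξ z = (hExtComplex ξ z).re := by
  rw [hExtComplex_eq_div_den, div_ofReal_re, hExt1]
  congr 1
  simp only [sq, mul_re, mul_im, sub_re, sub_im, ofReal_re, ofReal_im, normSq_apply]
  ring

theorem hExt2_eq_im (ξ z : ℂ) : hExt2 ξ z = (hExtComplex ξ z).im := by
  rw [hExtComplex_eq_div_den, div_ofReal_im, hExt2]
  congr 1
  simp only [sq, mul_re, mul_im, sub_re, sub_im, ofReal_re, ofReal_im, normSq_apply]
  ring

theorem analyticAt_hExtComplex {ξ z : ℂ} (h : 1 - conj ξ * z ≠ 0) :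
    AnalyticAt ℂ (hExtComplex ξ) z := by
  unfold hExtComplex
  fun_prop (disch := exact h)

theorem re_sq_add_im_sq_of_norm_eq_one {z : ℂ} (hz : ‖z‖ = 1) : z.re ^ 2 + z.im ^ 2 = 1 := by
  have := sq_norm_sub_sq_re z
  rw [hz] at this
  linarith

theorem den_eq_of_norm_eq_one (ξ : ℂ) {z : ℂ} (hz : ‖z‖ = 1) :
    den ξ z = (z.re - ξ.re) ^ 2 + (z.im - ξ.im) ^ 2 := by
  rw [den]
  linear_combination (ξ.re ^ 2 + ξ.im ^ 2 - 1) * re_sq_add_im_sq_of_norm_eq_one hz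

/-- `h(·, ξ)` has positive denominator on the closed unit disk, each of its components
(including the constant third component `0`) is harmonic in the open unit disk, and on the
unit circle it coincides with the boundary map `h̃(·, ξ)`;  i.e. `h(·, ξ)` is the harmonic
extension of `h̃(·, ξ)` to the disk. -/
theorem harmonic_extension_degree_two (ξ : ℂ) (hξ : ξ ∈ ball (0 : ℂ) 1) :
    (∀ z ∈ closedBall (0 : ℂ) 1, 0 < den ξ z) ∧
    HarmonicOnSet (hExt1 ξ) (ball (0 : ℂ) 1) ∧
    HarmonicOnSet (hExt2 ξ) (ball (0 : ℂ) 1) ∧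
    HarmonicOnSet (fun _ => (0 : ℝ)) (ball (0 : ℂ) 1) ∧
    (∀ z ∈ sphere (0 : ℂ) 1,
      hExt1 ξ z = ((z.re - ξ.re) ^ 2 - (z.im - ξ.im) ^ 2) /
          ((z.re - ξ.re) ^ 2 + (z.im - ξ.im) ^ 2) ^ 2 ∧
      hExt2 ξ z = 2 * (z.re - ξ.re) * (z.im - ξ.im) /
          ((z.re - ξ.re) ^ 2 + (z.im - ξ.im) ^ 2) ^ 2) := by
  rw [mem_ball_zero_iff] at hξ
  have hanalytic : ∀ z ∈ ball (0 : ℂ) 1, AnalyticAt ℂ (hExtComplex ξ) z := fun z hz =>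
    analyticAt_hExtComplex (one_sub_conj_mul_ne_zero hξ (mem_ball_zero_iff.1 hz).le)
  refine ⟨fun z hz => den_pos hξ (mem_closedBall_zero_iff.1 hz), ?_, ?_,
    (harmonicOnNhd_const 0).harmonicOnSet, fun z hz => ?_⟩
  · rw [funext (hExt1_eq_re ξ)]
    exact HarmonicOnNhd.harmonicOnSet fun z hz => (hanalytic z hz).harmonicAt_re
  · rw [funext (hExt2_eq_im ξ)]
    exact HarmonicOnNhd.harmonicOnSet fun z hz => (hanalytic z hz).harmonicAt_im
  · rw [mem_sphere_zero_iff_norm] at hz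
    rw [hExt1, hExt2, den_eq_of_norm_eq_one ξ hz, re_sq_add_im_sq_of_norm_eq_one hz]
    constructor <;> congr 1 <;> ring
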